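/- arXiv:math/0607480 — 6 statements merged into one kernel-verified Lean document; each statement's English description precedes it below -/
import Mathlib

section
/- Inverse formula in the truncated star algebra: let a₀ : ℝ² → Matrix n n ℂ be smooth with a₀(z) invertible for every z ∈ ℝ², and let a₁ : ℝ² → Matrix n n ℂ be smooth. Set b₀ = a₀⁻¹ (pointwise matrix inverse, which is smooth) and b₁ = −a₀⁻¹·a₁·a₀⁻¹ + (i/2)·{a₀⁻¹, a₀}·a₀⁻¹. Then (a₀,a₁) ⋆ (b₀,b₁) = (𝟙, 0) and (b₀,b₁) ⋆ (a₀,a₁) = (𝟙, 0), where 𝟙 denotes the constant function equal to the identity matrix and 0 the constant zero matrix. -/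
/-!
STATEMENT 1: Inverse formula in the truncated star algebra: if `a₀` is pointwise
invertible then `(a₀, a₁)` has the two-sided star-inverse
`(a₀⁻¹, −a₀⁻¹·a₁·a₀⁻¹ + (i/2)·{a₀⁻¹,a₀}·a₀⁻¹)`.
-/

attribute [local instance] Matrix.normedAddCommGroup Matrix.normedSpace

noncomputable section

/-- Partial derivative in the first variable `t`. -/
def partialT {n : ℕ} (f : ℝ × ℝ → Matrix (Fin n) (Fin n) ℂ) :
    ℝ × ℝ → Matrix (Fin n) (Fin n) ℂ :=
  fun z => fderiv ℝ f z (1, 0)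

/-- Partial derivative in the second variable `τ`. -/
def partialTau {n : ℕ} (f : ℝ × ℝ → Matrix (Fin n) (Fin n) ℂ) :
    ℝ × ℝ → Matrix (Fin n) (Fin n) ℂ :=
  fun z => fderiv ℝ f z (0, 1)

/-- Poisson bracket `{f,g} = ∂_τ f · ∂_t g − ∂_t f · ∂_τ g` (pointwise matrix products). -/
def poissonBracket {n : ℕ} (f g : ℝ × ℝ → Matrix (Fin n) (Fin n) ℂ) :
    ℝ × ℝ → Matrix (Fin n) (Fin n) ℂ :=
  partialTau f * partialT g - partialT f * partialTau g

/-- The truncated star product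
`(f₀,f₁) ⋆ (g₀,g₁) = (f₀·g₀, f₀·g₁ + f₁·g₀ − (i/2)·{f₀,g₀})`. -/
def starTrunc {n : ℕ}
    (a b : (ℝ × ℝ → Matrix (Fin n) (Fin n) ℂ) × (ℝ × ℝ → Matrix (Fin n) (Fin n) ℂ)) :
    (ℝ × ℝ → Matrix (Fin n) (Fin n) ℂ) × (ℝ × ℝ → Matrix (Fin n) (Fin n) ℂ) :=
  (a.1 * b.1, a.1 * b.2 + a.2 * b.1 - (Complex.I / 2) • poissonBracket a.1 b.1)

/-! ### Auxiliary material -/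

/-- Matrix multiplication as a continuous bilinear map (finite dimensions give continuity). -/
def mulL (n : ℕ) :
    Matrix (Fin n) (Fin n) ℂ →L[ℝ] Matrix (Fin n) (Fin n) ℂ →L[ℝ] Matrix (Fin n) (Fin n) ℂ :=
  LinearMap.toContinuousLinearMap
    { toFun := fun A => LinearMap.toContinuousLinearMap
        ((LinearMap.mul ℂ (Matrix (Fin n) (Fin n) ℂ) A).restrictScalars ℝ)
      map_add' := by intro A B; ext C; simp [add_mul]
      map_smul' := by intro r A; ext C; simp [smul_mul_assoc] }

@[simp] lemma mulL_apply {n : ℕ} (A B : Matrix (Fin n) (Fin n) ℂ) : mulL n A B = A * B := rfl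

theorem DifferentiableAt.matmul {n : ℕ} {f g : ℝ × ℝ → Matrix (Fin n) (Fin n) ℂ} {z : ℝ × ℝ}
    (hf : DifferentiableAt ℝ f z) (hg : DifferentiableAt ℝ g z) :
    DifferentiableAt ℝ (fun w => f w * g w) z := by
  exact (((mulL n).isBoundedBilinearMap.differentiableAt (f z, g z)).comp z (hf.prodMk hg) :)

theorem fderiv_matmul {n : ℕ} {f g : ℝ × ℝ → Matrix (Fin n) (Fin n) ℂ} {z : ℝ × ℝ}
    (hf : DifferentiableAt ℝ f z) (hg : DifferentiableAt ℝ g z) (v : ℝ × ℝ) :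
    fderiv ℝ (fun w => f w * g w) z v = f z * fderiv ℝ g z v + fderiv ℝ f z v * g z := by
  have h2 : fderiv ℝ (fun w => f w * g w) z
      = (mulL n).precompR (ℝ × ℝ) (f z) (fderiv ℝ g z)
        + (mulL n).precompL (ℝ × ℝ) (fderiv ℝ f z) (g z) := (mulL n).fderiv_of_bilinear hf hg
  rw [h2]
  simp [ContinuousLinearMap.precompR, ContinuousLinearMap.precompL]
  rfl

theorem differentiableAt_matrix_iff {n : ℕ} {f : ℝ × ℝ → Matrix (Fin n) (Fin n) ℂ} {z : ℝ × ℝ} :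
    DifferentiableAt ℝ f z ↔ ∀ i j, DifferentiableAt ℝ (fun w => f w i j) z := by
  refine (differentiableAt_pi (Φ := (f : ℝ × ℝ → Fin n → Fin n → ℂ))).trans ?_
  exact forall_congr' fun i => differentiableAt_pi

theorem DifferentiableAt.matrix_det {n : ℕ} {f : ℝ × ℝ → Matrix (Fin n) (Fin n) ℂ} {z : ℝ × ℝ}
    (hf : DifferentiableAt ℝ f z) :
    DifferentiableAt ℝ (fun w => (f w).det) z := by
  have h : (fun w => (f w).det)
      = fun w => ∑ σ : Equiv.Perm (Fin n), ((Equiv.Perm.sign σ : ℤ) : ℂ) * ∏ i, f w (σ i) i := by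
    funext w; rw [Matrix.det_apply']
  rw [h]
  apply DifferentiableAt.fun_sum
  intro σ _
  apply DifferentiableAt.const_mul
  exact (HasFDerivAt.finset_prod (u := Finset.univ)
    (g := fun i w => f w (σ i) i)
    (g' := fun i => fderiv ℝ (fun w => f w (σ i) i) z)
    (fun i _ => ((differentiableAt_matrix_iff.mp hf (σ i) i).hasFDerivAt))).differentiableAt

theorem DifferentiableAt.matrix_inv {n : ℕ} {f : ℝ × ℝ → Matrix (Fin n) (Fin n) ℂ} {z : ℝ × ℝ}
    (hf : DifferentiableAt ℝ f z) (hu : ∀ w, IsUnit (f w)) :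
    DifferentiableAt ℝ (fun w => (f w)⁻¹) z := by
  have hdet : DifferentiableAt ℝ (fun w => (f w).det) z := hf.matrix_det
  have hdetne : ∀ w, (f w).det ≠ 0 := fun w =>
    ((Matrix.isUnit_iff_isUnit_det (f w)).mp (hu w)).ne_zero
  have hadj : ∀ i j, DifferentiableAt ℝ (fun w => (f w).adjugate i j) z := by
    intro i j
    have h1 : (fun w => (f w).adjugate i j)
        = fun w => ((f w).updateRow j (Pi.single i 1)).det := by
      funext w; rw [Matrix.adjugate_apply]
    rw [h1]
    apply DifferentiableAt.matrix_det
    rw [differentiableAt_matrix_iff]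
    intro i' j'
    have h2 : (fun w => (f w).updateRow j (Pi.single i 1) i' j')
        = fun w => if i' = j then (Pi.single i (1:ℂ) : Fin n → ℂ) j' else f w i' j' := by
      funext w; rw [Matrix.updateRow_apply]
    rw [h2]
    by_cases h : i' = j
    · simp only [h, if_pos rfl]; exact differentiableAt_const _
    · simp only [if_neg h]; exact differentiableAt_matrix_iff.mp hf i' j'
  rw [differentiableAt_matrix_iff]
  intro i j
  have h3 : (fun w => (f w)⁻¹ i j)
      = fun w => ((f w).det)⁻¹ * (f w).adjugate i j := by
    funext w; rw [Matrix.inv_def, Matrix.smul_apply, smul_eq_mul, Ring.inverse_eq_inv]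
  rw [h3]
  exact (hdet.inv (hdetne z)).mul (hadj i j)

theorem fderiv_matrix_inv {n : ℕ} {f : ℝ × ℝ → Matrix (Fin n) (Fin n) ℂ} {z : ℝ × ℝ}
    (hf : DifferentiableAt ℝ f z) (hu : ∀ w, IsUnit (f w)) (v : ℝ × ℝ) :
    fderiv ℝ (fun w => (f w)⁻¹) z v
      = -((f z)⁻¹ * fderiv ℝ f z v * (f z)⁻¹) := by
  have hg : DifferentiableAt ℝ (fun w => (f w)⁻¹) z := hf.matrix_inv hu
  have hdet : ∀ w, IsUnit (f w).det := fun w => (Matrix.isUnit_iff_isUnit_det (f w)).mp (hu w)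
  have hc : (fun w => f w * (f w)⁻¹) = fun _ => (1 : Matrix (Fin n) (Fin n) ℂ) := by
    funext w; exact Matrix.mul_nonsing_inv _ (hdet w)
  have h0 : fderiv ℝ (fun w => f w * (f w)⁻¹) z v = 0 := by
    rw [hc, fderiv_fun_const]; rfl
  rw [fderiv_matmul hf hg v] at h0
  have hBA : (f z)⁻¹ * f z = 1 := Matrix.nonsing_inv_mul _ (hdet z)
  have := congrArg (fun X => (f z)⁻¹ * X) h0
  simp only [mul_add, ← mul_assoc, hBA, one_mul, mul_zero] at this
  have h4 : fderiv ℝ (fun w => (f w)⁻¹) z v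
      = -((f z)⁻¹ * fderiv ℝ f z v * (f z)⁻¹) := by
    have := this
    linear_combination (norm := noncomm_ring) this
  exact h4

theorem key1 {R : Type*} [Ring R] [Algebra ℂ R] (c : ℂ) (A B Y Dt Dτ : R)
    (hAB : A * B = 1) (hBA : B * A = 1) :
    A * (-(B * Y * B) + c • ((-(B * Dτ * B) * Dt - -(B * Dt * B) * Dτ) * B)) + Y * B
      - c • (Dτ * -(B * Dt * B) - Dt * -(B * Dτ * B)) = 0 := by
  have hA : ∀ X : R, A * (B * X) = X := fun X => by rw [← mul_assoc, hAB, one_mul]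
  have hB : ∀ X : R, B * (A * X) = X := fun X => by rw [← mul_assoc, hBA, one_mul]
  simp only [mul_add, mul_neg, neg_mul, sub_eq_add_neg, neg_neg, add_mul, smul_add, smul_neg,
    mul_smul_comm, mul_assoc, hA, hB, hAB, hBA, mul_one, one_mul]
  abel

theorem key2 {R : Type*} [Ring R] [Algebra ℂ R] (c : ℂ) (A B Y P : R)
    (hBA : B * A = 1) :
    B * Y + (-(B * Y * B) + c • (P * B)) * A - c • P = 0 := by
  have h : ∀ X : R, X * B * A = X := fun X => by rw [mul_assoc, hBA, mul_one]
  simp only [add_mul, neg_mul, smul_mul_assoc, h, sub_eq_add_neg]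
  abel

theorem starTrunc_inverse {n : ℕ}
    (a₀ a₁ : ℝ × ℝ → Matrix (Fin n) (Fin n) ℂ)
    (ha₀ : ContDiff ℝ (⊤ : ℕ∞) a₀) (ha₁ : ContDiff ℝ (⊤ : ℕ∞) a₁)
    (hinv : ∀ z : ℝ × ℝ, IsUnit (a₀ z))
    (b₀ b₁ : ℝ × ℝ → Matrix (Fin n) (Fin n) ℂ)
    (hb₀ : b₀ = fun z => (a₀ z)⁻¹)
    (hb₁ : b₁ = -(b₀ * a₁ * b₀) + (Complex.I / 2) • (poissonBracket b₀ a₀ * b₀)) :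
    starTrunc (a₀, a₁) (b₀, b₁) = (fun _ => (1 : Matrix (Fin n) (Fin n) ℂ), 0) ∧
      starTrunc (b₀, b₁) (a₀, a₁) = (fun _ => (1 : Matrix (Fin n) (Fin n) ℂ), 0) := by
  have hdet : ∀ w, IsUnit (a₀ w).det := fun w => (Matrix.isUnit_iff_isUnit_det (a₀ w)).mp (hinv w)
  have ha₀d : ∀ z, DifferentiableAt ℝ a₀ z := fun z => (ha₀.differentiable (by simp)) z
  have hAB : ∀ z, a₀ z * b₀ z = 1 := by
    intro z; rw [hb₀]; exact Matrix.mul_nonsing_inv _ (hdet z)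
  have hBA : ∀ z, b₀ z * a₀ z = 1 := by
    intro z; rw [hb₀]; exact Matrix.nonsing_inv_mul _ (hdet z)
  -- derivatives of b₀
  have hdb : ∀ z v, fderiv ℝ b₀ z v = -(b₀ z * fderiv ℝ a₀ z v * b₀ z) := by
    intro z v
    rw [hb₀]
    exact fderiv_matrix_inv (ha₀d z) hinv v
  have hpT : ∀ z, partialT b₀ z = -(b₀ z * partialT a₀ z * b₀ z) := fun z => hdb z (1, 0)
  have hpTau : ∀ z, partialTau b₀ z = -(b₀ z * partialTau a₀ z * b₀ z) := fun z => hdb z (0, 1)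
  constructor
  · unfold starTrunc
    refine Prod.ext ?_ ?_
    · funext z; exact hAB z
    · show a₀ * b₁ + a₁ * b₀ - (Complex.I / 2) • poissonBracket a₀ b₀ = 0
      funext z
      have hb₁z : b₁ z = -(b₀ z * a₁ z * b₀ z)
          + (Complex.I / 2) • ((partialTau b₀ z * partialT a₀ z
              - partialT b₀ z * partialTau a₀ z) * b₀ z) := by
        rw [hb₁]; rfl
      show a₀ z * b₁ z + a₁ z * b₀ z
          - (Complex.I / 2) • (partialTau a₀ z * partialT b₀ z
              - partialT a₀ z * partialTau b₀ z) = 0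
      rw [hb₁z, hpT z, hpTau z]
      exact key1 (Complex.I / 2) (a₀ z) (b₀ z) (a₁ z) (partialT a₀ z) (partialTau a₀ z)
        (hAB z) (hBA z)
  · unfold starTrunc
    refine Prod.ext ?_ ?_
    · funext z; exact hBA z
    · show b₀ * a₁ + b₁ * a₀ - (Complex.I / 2) • poissonBracket b₀ a₀ = 0
      funext z
      have hb₁z : b₁ z = -(b₀ z * a₁ z * b₀ z)
          + (Complex.I / 2) • (poissonBracket b₀ a₀ z * b₀ z) := by
        rw [hb₁]; rfl
      show b₀ z * a₁ z + b₁ z * a₀ z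
          - (Complex.I / 2) • poissonBracket b₀ a₀ z = 0
      rw [hb₁z]
      exact key2 (Complex.I / 2) (a₀ z) (b₀ z) (a₁ z) (poissonBracket b₀ a₀ z) (hBA z)

end
end

section
/- Integrality of the odd index functional: let A : ℝ → Matrix n n ℂ be a Schwartz function such that I + A(t) is invertible for every t ∈ ℝ (I the identity matrix). Then the function t ↦ tr((I + A(t))⁻¹ · A′(t)) is integrable on ℝ and ind(I+A) := (1/(2πi)) ∫_ℝ tr((I + A(t))⁻¹ · A′(t)) dt is an integer. -/
/-!
Jacobi's formula gives `(det (1 + A))' = det (1 + A) * φ` with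
`φ = tr ((1 + A)⁻¹ A')`, so `exp (∫ t in a..b, φ t) = det (1 + A b) / det (1 + A a)`.
Both determinants tend to `det 1 = 1` as `a → -∞`, `b → ∞`, hence `exp (∫ φ) = 1` and
`∫ φ ∈ 2πiℤ`. Integrability holds because `(1 + A)⁻¹` is continuous with limit `1` at infinity,
hence bounded, while `A'` is again a Schwartz function.
-/

attribute [local instance] Matrix.normedAddCommGroup Matrix.normedSpace

open MeasureTheory Filter Topology Matrix

instance Matrix.pseudoMetrizableSpace {m n R : Type*} [Finite m] [Finite n] [TopologicalSpace R]
    [TopologicalSpace.PseudoMetrizableSpace R] :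
    TopologicalSpace.PseudoMetrizableSpace (Matrix m n R) :=
  inferInstanceAs (TopologicalSpace.PseudoMetrizableSpace (m → n → R))

section MatrixAnalysis

variable {ι R : Type*} [Fintype ι] [DecidableEq ι]

theorem Matrix.sum_det_updateRow [CommRing R] (M B : Matrix ι ι R) :
    ∑ i, (M.updateRow i (B i)).det = trace (adjugate M * B) := by
  simp_rw [← cramer_transpose_apply, cramer_eq_adjugate_mulVec, ← adjugate_transpose,
    trace_mul_comm (adjugate M), trace, diag, mul_apply, mulVec, dotProduct, transpose_apply,
    mul_comm]

theorem Matrix.adjugate_eq_det_smul_inv [CommRing R] {M : Matrix ι ι R} (h : IsUnit M.det) :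
    adjugate M = M.det • M⁻¹ := by
  rw [inv_def, smul_smul, Ring.mul_inverse_cancel _ h, one_smul]

theorem HasDerivAt.matrix_det {𝕜 : Type*} [NontriviallyNormedField 𝕜]
    [NontriviallyNormedField R] [NormedAlgebra 𝕜 R]
    {M : 𝕜 → Matrix ι ι R} {M' : Matrix ι ι R} {t : 𝕜} (h : HasDerivAt M M' t) :
    HasDerivAt (fun s => (M s).det) (trace (adjugate (M t) * M')) t := by
  let D : ContinuousMultilinearMap R (fun _ : ι => ι → R) R :=
    ⟨(detRowAlternating : (ι → R) [⋀^ι]→ₗ[R] R).toMultilinearMap, continuous_id.matrix_det⟩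
  have := ((D.hasFDerivAt (M t)).restrictScalars 𝕜).comp_hasDerivAt t h
  rw [← sum_det_updateRow]
  exact this.congr_deriv (D.linearDeriv_apply _ _)

variable [NormedCommRing R] [CompleteSpace R]

theorem Filter.Tendsto.matrix_inv {X : Type*} {l : Filter X} {M : X → Matrix ι ι R}
    {N : Matrix ι ι R} (hM : Tendsto M l (𝓝 N)) (hN : IsUnit N.det) :
    Tendsto (fun x => (M x)⁻¹) l (𝓝 N⁻¹) :=
  (continuousAt_matrix_inv N (NormedRing.inverse_continuousAt hN.unit)).tendsto.comp hM

theorem Continuous.matrix_inv {X : Type*} [TopologicalSpace X] {M : X → Matrix ι ι R}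
    (hM : Continuous M) (h : ∀ x, IsUnit (M x).det) : Continuous fun x => (M x)⁻¹ :=
  continuous_iff_continuousAt.mpr fun x => (hM.tendsto x).matrix_inv (h x)

end MatrixAnalysis

theorem Continuous.exists_forall_norm_le_of_tendsto_cocompact {X E : Type*} [TopologicalSpace X]
    [SeminormedAddCommGroup E] {f : X → E} {c : E} (hf : Continuous f)
    (h : Tendsto f (cocompact X) (𝓝 c)) : ∃ C, ∀ x, ‖f x‖ ≤ C := by
  obtain ⟨C, hC⟩ := isBounded_iff_forall_norm_le.mp
    (hf.isBounded_range_iff_isBigO.mpr (h.isBigO_one ℝ))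
  exact ⟨C, fun x => hC _ ⟨x, rfl⟩⟩

/- `Y` enters through `‖Y ·‖` because instance search finds no `ContinuousENorm` on `Matrix`: the
topology of the local sup norm is not reducibly the product topology. -/
theorem MeasureTheory.Integrable.matrix_trace_bdd_mul {α ι 𝕜 : Type*} [MeasurableSpace α]
    {μ : Measure α} [Fintype ι] [NormedRing 𝕜] {B Y : α → Matrix ι ι 𝕜} {C : ℝ}
    (hY : Integrable (fun x => ‖Y x‖) μ) (hYm : AEStronglyMeasurable Y μ)
    (hB : AEStronglyMeasurable B μ) (hBC : ∀ᵐ x ∂μ, ‖B x‖ ≤ C) :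
    Integrable (fun x => trace (B x * Y x)) μ := by
  simp only [trace, diag, mul_apply]
  refine integrable_finsetSum _ fun i _ => integrable_finsetSum _ fun j _ => ?_
  have hYji : Integrable (fun x => Y x j i) μ :=
    hY.mono' ((continuous_id.matrix_elem j i).comp_aestronglyMeasurable hYm)
      (ae_of_all _ fun x => norm_entry_le_entrywise_sup_norm _)
  refine hYji.bdd_mul (c := C) ((continuous_id.matrix_elem i j).comp_aestronglyMeasurable hB) ?_
  filter_upwards [hBC] with x hx using (norm_entry_le_entrywise_sup_norm _).trans hx

namespace Complex

variable {f φ : ℝ → ℂ}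

theorem exp_intervalIntegral_eq_div (hφ : Continuous φ) (hf : ∀ t, HasDerivAt f (f t * φ t) t)
    {a : ℝ} (ha : f a ≠ 0) (b : ℝ) : exp (∫ t in a..b, φ t) = f b / f a := by
  have hconst : ∀ s, HasDerivAt (fun s => f s * exp (-∫ t in a..s, φ t)) 0 s := fun s => by
    have hF := intervalIntegral.integral_hasDerivAt_right (hφ.intervalIntegrable a s)
      hφ.aestronglyMeasurable.stronglyMeasurableAtFilter hφ.continuousAt
    exact ((hf s).mul hF.neg.cexp).congr_deriv (by simp only [Pi.neg_apply]; ring)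
  have hba := is_const_of_deriv_eq_zero (fun s => (hconst s).differentiableAt)
    (fun s => (hconst s).deriv) b a
  simp only [intervalIntegral.integral_same, neg_zero, exp_zero, mul_one] at hba
  rw [eq_div_iff ha, ← hba, mul_left_comm, ← exp_add, add_neg_cancel, exp_zero, mul_one]

theorem exp_integral_eq_one_of_tendsto_cocompact (hφ : Continuous φ) (hφi : Integrable φ)
    (hf : ∀ t, HasDerivAt f (f t * φ t) t) {L : ℂ} (hL : L ≠ 0)
    (hfL : Tendsto f (cocompact ℝ) (𝓝 L)) : exp (∫ t, φ t) = 1 := by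
  have hTop : Tendsto f atTop (𝓝 L) := hfL.mono_left atTop_le_cocompact
  have hBot : Tendsto (fun r => f (-r)) atTop (𝓝 L) :=
    (hfL.mono_left atBot_le_cocompact).comp tendsto_neg_atTop_atBot
  have hexp : Tendsto (fun r => exp (∫ t in -r..r, φ t)) atTop (𝓝 (exp (∫ t, φ t))) :=
    (continuous_exp.tendsto _).comp
      (intervalIntegral_tendsto_integral hφi tendsto_neg_atTop_atBot tendsto_id)
  have hquot : Tendsto (fun r => exp (∫ t in -r..r, φ t)) atTop (𝓝 (L / L)) := by
    refine (hTop.div hBot hL).congr' ?_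
    filter_upwards [hBot.eventually_ne hL] with r hr
    exact (exp_intervalIntegral_eq_div hφ hf hr r).symm
  rw [tendsto_nhds_unique hexp hquot, div_self hL]

end Complex

theorem odd_index_is_integer {n : ℕ}
    (A : SchwartzMap ℝ (Matrix (Fin n) (Fin n) ℂ))
    (hinv : ∀ t : ℝ, IsUnit (1 + A t)) :
    Integrable (fun t : ℝ => Matrix.trace ((1 + A t)⁻¹ * deriv (⇑A) t)) ∧
      ∃ k : ℤ,
        (1 / (2 * Real.pi * Complex.I)) *
            ∫ t : ℝ, Matrix.trace ((1 + A t)⁻¹ * deriv (⇑A) t) = (k : ℂ) := by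
  have hA' : ⇑(SchwartzMap.derivCLM ℝ _ A) = deriv A := funext (SchwartzMap.derivCLM_apply ℝ A)
  have hA'_cont : Continuous (deriv A) := hA' ▸ (SchwartzMap.derivCLM ℝ _ A).continuous
  have hdet : ∀ t, IsUnit (1 + A t).det := fun t => (isUnit_iff_isUnit_det _).mp (hinv t)
  have hM_cont : Continuous fun t => 1 + A t := continuous_const.add A.continuous
  have hM_lim : Tendsto (fun t => 1 + A t) (cocompact ℝ) (𝓝 1) := by
    have h : Tendsto (fun t => 1 + A t) (cocompact ℝ) (𝓝 (1 + 0)) :=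
      (zero_at_infty A).const_add 1
    rwa [add_zero] at h
  have hinv_cont := hM_cont.matrix_inv hdet
  obtain ⟨C, hC⟩ := hinv_cont.exists_forall_norm_le_of_tendsto_cocompact
    (hM_lim.matrix_inv (by simp))
  have hφ_int : Integrable (fun t => trace ((1 + A t)⁻¹ * deriv A t)) :=
    Integrable.matrix_trace_bdd_mul (hA' ▸ (SchwartzMap.derivCLM ℝ _ A).integrable.norm)
      hA'_cont.aestronglyMeasurable hinv_cont.aestronglyMeasurable (ae_of_all _ hC)
  have hdet_deriv : ∀ t, HasDerivAt (fun s => (1 + A s).det)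
      ((1 + A t).det * trace ((1 + A t)⁻¹ * deriv A t)) t := fun t => by
    have := ((A.differentiableAt (x := t)).hasDerivAt.const_add 1).matrix_det
    rwa [adjugate_eq_det_smul_inv (hdet t), smul_mul, trace_smul, smul_eq_mul] at this
  have hdet_lim : Tendsto (fun t => (1 + A t).det) (cocompact ℝ) (𝓝 1) := by
    simpa only [Function.comp_def, id, det_one] using
      (continuous_id.matrix_det.tendsto _).comp hM_lim
  obtain ⟨k, hk⟩ := Complex.exp_eq_one_iff.mp <| Complex.exp_integral_eq_one_of_tendsto_cocompact
    (hinv_cont.matrix_mul hA'_cont).matrix_trace hφ_int hdet_deriv one_ne_zero hdet_lim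
  refine ⟨hφ_int, k, ?_⟩
  rw [hk]
  field_simp
end

section
/- Invertibility away from the origin of the suspended Dirac-type family: if (t,τ) ∈ ℝ² with (t,τ) ≠ (0,0), then D(t,τ) is invertible, i.e. it is a bijection of H₁ × H₂ with bounded inverse, regardless of whether T is invertible. -/
/-!
`D(-t,τ)` and `D(t,τ)` commute, and their product is the block-diagonal operator
`diag(T*T + t² + τ², TT* + t² + τ²)`: the cross terms cancel and `(-it - τ)(it - τ) = t² + τ²`.
Each block is a positive operator plus a positive scalar, hence invertible, so for
`(t,τ) ≠ (0,0)` the product is a unit and therefore so is each commuting factor.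
-/

noncomputable section

open ContinuousLinearMap

variable {H₁ H₂ : Type*}
  [NormedAddCommGroup H₁] [InnerProductSpace ℂ H₁] [CompleteSpace H₁]
  [NormedAddCommGroup H₂] [InnerProductSpace ℂ H₂] [CompleteSpace H₂]

/-- The doubly suspended Dirac-type family
`D(t,τ)(x,y) = ((it − τ)·x + T*y, T x + (it + τ)·y)` on `H₁ × H₂`. -/
def suspendedDirac (T : H₁ →L[ℂ] H₂) (t τ : ℝ) : (H₁ × H₂) →L[ℂ] (H₁ × H₂) :=
  (((Complex.I * t - τ) • ContinuousLinearMap.fst ℂ H₁ H₂) +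
      (ContinuousLinearMap.adjoint T).comp (ContinuousLinearMap.snd ℂ H₁ H₂)).prod
    ((T.comp (ContinuousLinearMap.fst ℂ H₁ H₂)) +
      ((Complex.I * t + τ) • ContinuousLinearMap.snd ℂ H₁ H₂))

theorem IsUnit.continuousLinearMap_prodMap {R M N : Type*} [Semiring R]
    [TopologicalSpace M] [AddCommMonoid M] [Module R M]
    [TopologicalSpace N] [AddCommMonoid N] [Module R N]
    {f : M →L[R] M} {g : N →L[R] N} (hf : IsUnit f) (hg : IsUnit g) :
    IsUnit (f.prodMap g) := by
  obtain ⟨u, rfl⟩ := hf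
  obtain ⟨v, rfl⟩ := hg
  exact ⟨(ContinuousLinearEquiv.unitsEquiv R (M × N)).symm
    ((ContinuousLinearEquiv.unitsEquiv R M u).prodCongr (ContinuousLinearEquiv.unitsEquiv R N v)),
    rfl⟩

theorem ContinuousLinearMap.IsPositive.isUnit_add_smul_one {H : Type*} [NormedAddCommGroup H]
    [InnerProductSpace ℂ H] [CompleteSpace H] {S : H →L[ℂ] H} (hS : S.IsPositive) {c : ℝ}
    (hc : 0 < c) : IsUnit (S + c • 1) := by
  rw [← Algebra.algebraMap_eq_smul_one]
  exact ((isStrictlyPositive_algebraMap hc).nonneg_add ((nonneg_iff_isPositive S).mpr hS)).isUnit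

def shiftedLaplacian (T : H₁ →L[ℂ] H₂) (c : ℝ) : (H₁ × H₂) →L[ℂ] (H₁ × H₂) :=
  (adjoint T ∘L T + c • 1).prodMap (T ∘L adjoint T + c • 1)

theorem isUnit_shiftedLaplacian (T : H₁ →L[ℂ] H₂) {c : ℝ} (hc : 0 < c) :
    IsUnit (shiftedLaplacian T c) :=
  ((isPositive_adjoint_comp_self T).isUnit_add_smul_one hc).continuousLinearMap_prodMap
    ((isPositive_self_comp_adjoint T).isUnit_add_smul_one hc)

theorem suspendedDirac_neg_mul (T : H₁ →L[ℂ] H₂) (t τ : ℝ) :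
    suspendedDirac T (-t) τ * suspendedDirac T t τ = shiftedLaplacian T (t ^ 2 + τ ^ 2) := by
  ext z <;>
    simp only [suspendedDirac, shiftedLaplacian, Complex.ofReal_neg, mul_neg, comp_apply,
      inl_apply, inr_apply, mul_apply_eq_comp, ContinuousLinearMap.prod_apply, add_apply,
      smul_apply, coe_fst', coe_snd', map_zero, map_smul, add_zero, zero_add, smul_zero,
      coe_prodMap', FunLike.coe_add, FunLike.coe_smul, FunLike.coe_one_eq_id, Prod.map_apply,
      Pi.add_apply, Pi.smul_apply, id_eq] <;>
    match_scalars <;>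
    first | ring1 | linear_combination (-(t : ℂ) ^ 2) * Complex.I_sq

theorem commute_suspendedDirac_neg (T : H₁ →L[ℂ] H₂) (t τ : ℝ) :
    Commute (suspendedDirac T (-t) τ) (suspendedDirac T t τ) := by
  have h := suspendedDirac_neg_mul T (-t) τ
  rw [neg_neg, neg_sq, ← suspendedDirac_neg_mul T t τ] at h
  exact h.symm

theorem suspendedDirac_isUnit_of_ne_zero (T : H₁ →L[ℂ] H₂) (t τ : ℝ)
    (h : (t, τ) ≠ (0, 0)) :
    IsUnit (suspendedDirac T t τ) := by
  have hc : 0 < t ^ 2 + τ ^ 2 := by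
    obtain ht | hτ : t ≠ 0 ∨ τ ≠ 0 := by
      contrapose! h
      rw [h.1, h.2]
    all_goals positivity
  have hprod := isUnit_shiftedLaplacian T hc
  rw [← suspendedDirac_neg_mul] at hprod
  exact ((commute_suspendedDirac_neg T t τ).isUnit_mul_iff.mp hprod).2

end
end

section
/- Integral formula for the inverse of D + it: let D be a bounded self-adjoint operator on a complex Hilbert space H and let t ∈ ℝ with t ≠ 0. Then D + it·id_H is invertible (a bijection with bounded inverse), the function s ↦ e^{−s t²}·(D − it·id_H)∘exp(−s·D∘D) from [0,∞) to the bounded operators on H is Bochner integrable, and ∫₀^∞ e^{−s t²}·(D − it·id_H)∘exp(−s·D∘D) ds = (D + it·id_H)⁻¹. -/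
/-!
Since `D` and `it` commute, `D² + t² = (D - it)(D + it)`, so it suffices to invert `D² + t²`.
As `D² ≥ 0`, the heat semigroup `e^{-s(D² + t²)} = e^{-st²} e^{-sD²}` has norm at most `e^{-st²}`.
In any real Banach algebra, exponential decay of `s ↦ e^{-sb}` makes `∫₀^∞ e^{-sb} ds` a two-sided
inverse of `b`, because `-e^{-sb}` is an antiderivative of `e^{-sb} b` that vanishes at infinity.
-/

open MeasureTheory NormedSpace Set Filter Topology

lemma Ring.inverse_eq_mul_inverse_of_commute {M₀ : Type*} [MonoidWithZero M₀] {x y : M₀}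
    (hxy : Commute x y) (hunit : IsUnit (x * y)) : Ring.inverse y = x * Ring.inverse (x * y) := by
  have hy : IsUnit y := (hxy.isUnit_mul_iff.mp hunit).2
  calc Ring.inverse y = Ring.inverse y * (y * x) * Ring.inverse (x * y) := by
        rw [← hxy.eq, mul_assoc, Ring.mul_inverse_cancel _ hunit, mul_one]
    _ = x * Ring.inverse (x * y) := by rw [← mul_assoc, Ring.inverse_mul_cancel _ hy, one_mul]

lemma exp_neg_smul_add_smul_one {A : Type*} [NormedRing A] [NormedAlgebra ℝ A] [CompleteSpace A]
    (x : A) (r s : ℝ) : exp (-s • (x + r • 1)) = Real.exp (-(s * r)) • exp (-s • x) := by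
  -- the global facts about `exp` (continuity, `exp_add_of_commute`) are stated over `ℚ`
  let +nondep : NormedAlgebra ℚ A := .restrictScalars ℚ ℝ A
  rw [smul_add, smul_smul, neg_mul,
    exp_add_of_commute ((Commute.one_right _).smul_right _), ← Algebra.algebraMap_eq_smul_one,
    ← algebraMap_exp_comm, ← Real.exp_eq_exp_ℝ, Algebra.algebraMap_eq_smul_one, mul_smul_one]

section Decay

variable {A : Type*} [NormedRing A] [NormedAlgebra ℝ A] [CompleteSpace A] {b : A} {c : ℝ}

lemma integrableOn_exp_neg_smul_of_norm_le (hc : 0 < c)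
    (hb : ∀ s, 0 ≤ s → ‖exp (-s • b)‖ ≤ Real.exp (-(s * c))) :
    IntegrableOn (fun s : ℝ => exp (-s • b)) (Ioi 0) := by
  let +nondep : NormedAlgebra ℚ A := .restrictScalars ℚ ℝ A
  refine (exp_neg_integrableOn_Ioi 0 hc).mono'
    (by fun_prop : Continuous fun s : ℝ => exp (-s • b)).aestronglyMeasurable.restrict ?_
  filter_upwards [ae_restrict_mem measurableSet_Ioi] with s hs
  simpa [mul_comm] using hb s hs.le

omit [CompleteSpace A] in
lemma tendsto_exp_neg_smul_of_norm_le (hc : 0 < c)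
    (hb : ∀ s, 0 ≤ s → ‖exp (-s • b)‖ ≤ Real.exp (-(s * c))) :
    Tendsto (fun s : ℝ => exp (-s • b)) atTop (𝓝 0) := by
  have hdecay : Tendsto (fun s : ℝ => Real.exp (-(s * c))) atTop (𝓝 0) :=
    Real.tendsto_exp_atBot.comp (tendsto_neg_atTop_atBot.comp (tendsto_id.atTop_mul_const hc))
  exact squeeze_zero_norm' (eventually_ge_atTop 0 |>.mono hb) hdecay

lemma integral_exp_neg_smul_mul_self (hc : 0 < c)
    (hb : ∀ s, 0 ≤ s → ‖exp (-s • b)‖ ≤ Real.exp (-(s * c))) :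
    (∫ s in Ioi (0 : ℝ), exp (-s • b)) * b = 1 := by
  have hderiv : ∀ s : ℝ, HasDerivAt (fun u : ℝ => -exp (-u • b)) (exp (-s • b) * b) s := by
    intro s
    have h := (hasDerivAt_exp_smul_const (-b) s).neg
    simp only [smul_neg, ← neg_smul, mul_neg, neg_neg] at h
    exact h
  have hint := integrableOn_exp_neg_smul_of_norm_le hc hb
  rw [← integral_mul_const_of_integrable hint,
    integral_Ioi_of_hasDerivAt_of_tendsto' (fun s _ => hderiv s) (hint.mul_const b)
      (tendsto_exp_neg_smul_of_norm_le hc hb).neg]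
  simp

lemma commute_integral_exp_neg_smul (hc : 0 < c)
    (hb : ∀ s, 0 ≤ s → ‖exp (-s • b)‖ ≤ Real.exp (-(s * c))) :
    Commute b (∫ s in Ioi (0 : ℝ), exp (-s • b)) := by
  let +nondep : NormedAlgebra ℚ A := .restrictScalars ℚ ℝ A
  have hint := integrableOn_exp_neg_smul_of_norm_le hc hb
  rw [Commute, SemiconjBy, ← integral_mul_const_of_integrable hint,
    ← integral_const_mul_of_integrable hint]
  congr 1 with s
  exact (Commute.exp_right ((Commute.refl b).smul_right _)).eq

lemma isUnit_of_norm_exp_neg_smul_le (hc : 0 < c)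
    (hb : ∀ s, 0 ≤ s → ‖exp (-s • b)‖ ≤ Real.exp (-(s * c))) : IsUnit b :=
  ⟨⟨b, _, by rw [(commute_integral_exp_neg_smul hc hb).eq, integral_exp_neg_smul_mul_self hc hb],
    integral_exp_neg_smul_mul_self hc hb⟩, rfl⟩

lemma integral_exp_neg_smul_eq_inverse (hc : 0 < c)
    (hb : ∀ s, 0 ≤ s → ‖exp (-s • b)‖ ≤ Real.exp (-(s * c))) :
    ∫ s in Ioi (0 : ℝ), exp (-s • b) = Ring.inverse b := by
  calc ∫ s in Ioi (0 : ℝ), exp (-s • b)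
      = (∫ s in Ioi (0 : ℝ), exp (-s • b)) * (b * Ring.inverse b) := by
        rw [Ring.mul_inverse_cancel _ (isUnit_of_norm_exp_neg_smul_le hc hb), mul_one]
    _ = Ring.inverse b := by rw [← mul_assoc, integral_exp_neg_smul_mul_self hc hb, one_mul]

end Decay

section CStarAlgebra

variable {A : Type*} [CStarAlgebra A] [PartialOrder A] [StarOrderedRing A]

lemma norm_exp_le_one_of_nonpos {a : A} (ha : a ≤ 0) : ‖exp a‖ ≤ 1 := by
  have hsa : IsSelfAdjoint a := by simpa using (neg_nonneg.mpr ha).isSelfAdjoint.neg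
  rw [← CFC.real_exp_eq_normedSpace_exp hsa]
  refine norm_cfc_le zero_le_one fun x hx => ?_
  have hx0 : x ≤ 0 :=
    (le_algebraMap_iff_spectrum_le (r := (0 : ℝ)) hsa).mp (by simpa using ha) x hx
  simpa [abs_of_pos (Real.exp_pos x)] using hx0

lemma norm_exp_neg_smul_add_smul_one_le {a : A} (ha : 0 ≤ a) (r : ℝ) {s : ℝ} (hs : 0 ≤ s) :
    ‖exp (-s • (a + r • 1))‖ ≤ Real.exp (-(s * r)) := by
  rw [exp_neg_smul_add_smul_one, norm_smul, Real.norm_of_nonneg (Real.exp_pos _).le]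
  refine mul_le_of_le_one_right (Real.exp_pos _).le (norm_exp_le_one_of_nonpos ?_)
  simpa using smul_nonneg hs ha

end CStarAlgebra

lemma sub_I_mul_smul_one_mul_add_I_mul_smul_one {A : Type*} [Ring A] [Algebra ℂ A] (x : A) (t : ℝ) :
    (x - (Complex.I * t) • 1) * (x + (Complex.I * t) • 1) = x * x + (t ^ 2 : ℝ) • 1 := by
  have hsq : (Complex.I * t) * (Complex.I * t) = -((t ^ 2 : ℝ) : ℂ) := by
    push_cast; ring_nf; rw [Complex.I_sq]; ring
  rw [← Complex.coe_smul]
  simp only [sub_mul, mul_add, smul_mul_assoc, mul_smul_comm, one_mul, mul_one, smul_sub, smul_smul,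
    hsq, neg_smul]
  abel

theorem inverse_of_suspended_as_heat_integral {H : Type*} [NormedAddCommGroup H]
    [InnerProductSpace ℂ H] [CompleteSpace H]
    (D : H →L[ℂ] H) (hD : IsSelfAdjoint D) (t : ℝ) (ht : t ≠ 0) :
    IsUnit (D + (Complex.I * t) • (1 : H →L[ℂ] H)) ∧
      IntegrableOn
        (fun s : ℝ =>
          Real.exp (-(s * t ^ 2)) •
            ((D - (Complex.I * t) • (1 : H →L[ℂ] H)) * NormedSpace.exp (-s • (D * D))))
        (Set.Ici 0) ∧
      ∫ s in Set.Ici (0 : ℝ),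
          Real.exp (-(s * t ^ 2)) •
            ((D - (Complex.I * t) • (1 : H →L[ℂ] H)) * NormedSpace.exp (-s • (D * D))) =
        Ring.inverse (D + (Complex.I * t) • (1 : H →L[ℂ] H)) := by
  set c : ℂ := Complex.I * t
  have hD2 : 0 ≤ D * D := by simpa [hD.star_eq] using star_mul_self_nonneg D
  have ht2 : 0 < t ^ 2 := by positivity
  have hdecay := fun s (hs : 0 ≤ s) => norm_exp_neg_smul_add_smul_one_le hD2 (t ^ 2) hs
  have hcomm : Commute (D - c • 1) (D + c • 1) :=
    have hc : Commute D (c • 1) := (Commute.one_right D).smul_right c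
    ((Commute.refl D).add_right hc).sub_left (hc.symm.add_right (Commute.refl _))
  have hfac : (D - c • 1) * (D + c • 1) = D * D + (t ^ 2 : ℝ) • 1 :=
    sub_I_mul_smul_one_mul_add_I_mul_smul_one D t
  have hunit : IsUnit ((D - c • 1) * (D + c • 1)) :=
    hfac ▸ isUnit_of_norm_exp_neg_smul_le ht2 hdecay
  have hintegrand : (fun s : ℝ => Real.exp (-(s * t ^ 2)) • ((D - c • 1) * exp (-s • (D * D))))
      = fun s => (D - c • 1) * exp (-s • (D * D + (t ^ 2 : ℝ) • 1)) := by
    funext s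
    rw [exp_neg_smul_add_smul_one, mul_smul_comm]
  have hint := integrableOn_exp_neg_smul_of_norm_le ht2 hdecay
  rw [hintegrand, integrableOn_Ici_iff_integrableOn_Ioi, integral_Ici_eq_integral_Ioi]
  refine ⟨(hcomm.isUnit_mul_iff.mp hunit).2, hint.const_mul _, ?_⟩
  rw [integral_const_mul_of_integrable hint, integral_exp_neg_smul_eq_inverse ht2 hdecay, ← hfac,
    Ring.inverse_eq_mul_inverse_of_commute hcomm hunit]
end

section
/- Consistency of the doubly regularized trace: let h : ℝ → ℂ be a smooth function and for p ∈ ℕ define g_p : ℝ → ℂ by the p-fold iterated integral g_p(t) = ∫_{−t}^{t} ∫_0^{t_p} ⋯ ∫_0^{t_1} h^{(p)}(r) dr dt_1 ⋯ dt_p (so g_0(t) = ∫_{−t}^{t} h(r) dr). Then for every p ∈ ℕ and every t ∈ ℝ, g_{p+1}(t) − g_p(t) = −h^{(p)}(0) · (t^{p+1} − (−t)^{p+1}) / (p+1)!. In particular g_{p+1} − g_p is a polynomial in t with zero constant term, so the coefficient of t⁰ in any asymptotic expansion of g_p as t → ∞ is independent of p. -/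
/-!
STATEMENT 10: Consistency of the doubly regularized trace: for smooth
`h : ℝ → ℂ` and the iterated integrals
`g_p(t) = ∫_{−t}^{t} ∫_0^{t_p} ⋯ ∫_0^{t_1} h^{(p)}(r) dr dt_1 ⋯ dt_p`,
one has `g_{p+1}(t) − g_p(t) = −h^{(p)}(0)·(t^{p+1} − (−t)^{p+1})/(p+1)!`.
-/

noncomputable section

/-- `j`-fold iterated integral from `0`: `iterInt f 0 = f` and
`iterInt f (j+1) x = ∫_0^x iterInt f j`. -/
def iterInt (f : ℝ → ℂ) : ℕ → ℝ → ℂ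
  | 0 => f
  | (j + 1) => fun x => ∫ u in (0 : ℝ)..x, iterInt f j u

/-- `g_p(t) = ∫_{−t}^{t} ∫_0^{t_p} ⋯ ∫_0^{t_1} h^{(p)}(r) dr dt_1 ⋯ dt_p`. -/
def regTraceFun (h : ℝ → ℂ) (p : ℕ) (t : ℝ) : ℂ :=
  ∫ u in (-t)..t, iterInt (iteratedDeriv p h) p u

lemma iterInt_continuous {f : ℝ → ℂ} (hf : Continuous f) (j : ℕ) :
    Continuous (iterInt f j) := by
  induction j with
  | zero => exact hf
  | succ j ih =>
      exact intervalIntegral.continuous_primitive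
        (fun a b => ih.intervalIntegrable a b) 0

lemma iterInt_sub {f g : ℝ → ℂ} (hf : Continuous f) (hg : Continuous g) (j : ℕ)
    (x : ℝ) : iterInt (f - g) j x = iterInt f j x - iterInt g j x := by
  induction j generalizing x with
  | zero => rfl
  | succ j ih =>
      show (∫ u in (0:ℝ)..x, iterInt (f - g) j u) = _
      rw [intervalIntegral.integral_congr (g := fun u => iterInt f j u - iterInt g j u)
        (fun u _ => ih u),
        intervalIntegral.integral_sub
          ((iterInt_continuous hf j).intervalIntegrable 0 x)
          ((iterInt_continuous hg j).intervalIntegrable 0 x)]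
      rfl

lemma iterInt_const (c : ℂ) (j : ℕ) (x : ℝ) :
    iterInt (fun _ => c) j x = c * (x : ℂ) ^ j / (Nat.factorial j : ℂ) := by
  induction j generalizing x with
  | zero => simp [iterInt]
  | succ j ih =>
      show (∫ u in (0:ℝ)..x, iterInt (fun _ => c) j u) = _
      rw [intervalIntegral.integral_congr
        (g := fun u : ℝ => c / (Nat.factorial j : ℂ) * (((u ^ j : ℝ) : ℝ) : ℂ))
        (fun u _ => by rw [ih u]; push_cast; ring)]
      rw [intervalIntegral.integral_const_mul, intervalIntegral.integral_ofReal,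
        integral_pow]
      have hfac : ((Nat.factorial (j + 1) : ℂ)) = (Nat.factorial j : ℂ) * ((j : ℂ) + 1) := by
        rw [Nat.factorial_succ]; push_cast; ring
      have h1 : (Nat.factorial j : ℂ) ≠ 0 := by exact_mod_cast (Nat.factorial_pos j).ne'
      have h2 : ((j : ℂ) + 1) ≠ 0 := by
        exact_mod_cast (Nat.cast_add_one_ne_zero j : ((j : ℂ) + 1) ≠ 0)
      rw [hfac]
      push_cast
      field_simp
      simp

lemma iterInt_one_then {f : ℝ → ℂ} (j : ℕ) (x : ℝ) :
    iterInt f (j + 1) x = iterInt (iterInt f 1) j x := by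
  induction j generalizing x with
  | zero => rfl
  | succ j ih =>
      show (∫ u in (0:ℝ)..x, iterInt f (j + 1) u) = (∫ u in (0:ℝ)..x, iterInt (iterInt f 1) j u)
      exact intervalIntegral.integral_congr (fun u _ => ih u)

theorem regTraceFun_succ_sub (h : ℝ → ℂ) (hh : ContDiff ℝ (⊤ : ℕ∞) h) (p : ℕ) (t : ℝ) :
    regTraceFun h (p + 1) t - regTraceFun h p t =
      -(iteratedDeriv p h 0) *
        ((t ^ (p + 1) - (-t) ^ (p + 1)) / (Nat.factorial (p + 1) : ℂ)) := by
  have hcont : Continuous (iteratedDeriv p h) :=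
    hh.continuous_iteratedDeriv p (by exact_mod_cast le_top)
  have hcont' : Continuous (iteratedDeriv (p + 1) h) :=
    hh.continuous_iteratedDeriv (p + 1) (by exact_mod_cast le_top)
  have hdiff : Differentiable ℝ (iteratedDeriv p h) :=
    hh.differentiable_iteratedDeriv p (by
      exact_mod_cast ENat.coe_lt_top p)
  set c := iteratedDeriv p h 0 with hc
  -- Step 1: one integration of the (p+1)-st derivative
  have hstep1 : ∀ x : ℝ, iterInt (iteratedDeriv (p + 1) h) 1 x =
      iteratedDeriv p h x - c := by
    intro x
    show (∫ u in (0:ℝ)..x, iteratedDeriv (p + 1) h u) = _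
    rw [intervalIntegral.integral_congr
      (g := fun u => deriv (iteratedDeriv p h) u)
      (fun u _ => by rw [← iteratedDeriv_succ])]
    rw [intervalIntegral.integral_deriv_eq_sub (fun u _ => hdiff u)
      (by
        apply Continuous.intervalIntegrable
        have : deriv (iteratedDeriv p h) = iteratedDeriv (p + 1) h := by
          funext u; rw [iteratedDeriv_succ]
        rw [this]; exact hcont')]
  -- Step 2: the (p+1)-fold integral
  have hstep2 : ∀ u : ℝ, iterInt (iteratedDeriv (p + 1) h) (p + 1) u =
      iterInt (iteratedDeriv p h) p u - c * (u : ℂ) ^ p / (Nat.factorial p : ℂ) := by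
    intro u
    rw [iterInt_one_then]
    have heq : iterInt (iteratedDeriv (p + 1) h) 1 =
        (iteratedDeriv p h) - (fun _ => c) := by
      funext x; simpa using hstep1 x
    rw [heq, iterInt_sub hcont continuous_const, iterInt_const]
  -- Step 3: subtract the integrals over [-t, t]
  unfold regTraceFun
  rw [intervalIntegral.integral_congr (fun u _ => hstep2 u),
    intervalIntegral.integral_sub
      ((iterInt_continuous hcont p).intervalIntegrable _ _)
      ((by continuity : Continuous fun u : ℝ =>
          c * (u : ℂ) ^ p / (Nat.factorial p : ℂ)).intervalIntegrable _ _)]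
  have hint : (∫ u in (-t)..t, c * (u : ℂ) ^ p / (Nat.factorial p : ℂ)) =
      c * ((t ^ (p + 1) - (-t) ^ (p + 1)) / (Nat.factorial (p + 1) : ℂ)) := by
    rw [intervalIntegral.integral_congr
      (g := fun u : ℝ => c / (Nat.factorial p : ℂ) * (((u ^ p : ℝ) : ℝ) : ℂ))
      (fun u _ => by push_cast; ring)]
    rw [intervalIntegral.integral_const_mul, intervalIntegral.integral_ofReal,
      integral_pow]
    have hfac : ((Nat.factorial (p + 1) : ℂ)) = (Nat.factorial p : ℂ) * ((p : ℂ) + 1) := by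
      rw [Nat.factorial_succ]; push_cast; ring
    have h1 : (Nat.factorial p : ℂ) ≠ 0 := by exact_mod_cast (Nat.factorial_pos p).ne'
    have h2 : ((p : ℂ) + 1) ≠ 0 := Nat.cast_add_one_ne_zero p
    rw [hfac]
    push_cast
    field_simp
  rw [hint]
  ring

end
end

section
/- Uniform symbol estimates for Laplace-type integrals: let C, δ > 0 and let h : [0,∞) → ℂ be continuous with |h(s)| ≤ C·e^{−δ s} for all s ≥ 0. For v ≥ 0 and t ∈ ℝ set g(v,t) = ∫_v^∞ e^{−s t²} h(s) ds. Then for each v ≥ 0 the function t ↦ g(v,t) is smooth, and for every p ∈ ℕ there is a constant C_p > 0 (independent of v) such that |((t·∂/∂t)^p g)(v,t)| ≤ C_p / (1 + t²) for all v ≥ 0 and all t ∈ ℝ, where (t·∂/∂t)^p denotes the p-fold application of the operator f ↦ t·(∂f/∂t) in the variable t. -/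
/-!
STATEMENT 11: Uniform symbol estimates for Laplace-type integrals: if
`|h(s)| ≤ C e^{−δs}` on `[0,∞)` and `g(v,t) = ∫_v^∞ e^{−st²} h(s) ds`, then for
each `v ≥ 0` the map `t ↦ g(v,t)` is smooth and for every `p` there is
`C_p > 0` with `|((t∂_t)^p g)(v,t)| ≤ C_p/(1+t²)` for all `v ≥ 0`, `t ∈ ℝ`.
-/

open MeasureTheory

noncomputable section

/-- `g(v,t) = ∫_v^∞ e^{−st²} h(s) ds`. -/
def laplaceG (h : ℝ → ℂ) (v t : ℝ) : ℂ :=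
  ∫ s in Set.Ioi v, Real.exp (-(s * t ^ 2)) • h s

/-- The operator `f ↦ t·(∂f/∂t)`. -/
def tDer (f : ℝ → ℂ) : ℝ → ℂ := fun t => t • deriv f t
lemma pow_mul_exp_le' (m : ℕ) {x : ℝ} (hx : 0 ≤ x) :
    x ^ m * Real.exp (-x) ≤ (m.factorial * 2 ^ m) * Real.exp (-(x/2)) := by
  have h1 : (x/2) ^ m / m.factorial ≤ Real.exp (x/2) :=
    Real.pow_div_factorial_le_exp _ (by positivity) m
  have h2 : (x/2) ^ m ≤ m.factorial * Real.exp (x/2) := by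
    rw [div_le_iff₀ (by positivity)] at h1; linarith
  have h3 : x ^ m ≤ (m.factorial * 2 ^ m) * Real.exp (x/2) := by
    have : x ^ m = (x/2) ^ m * 2 ^ m := by rw [div_pow]; field_simp
    rw [this]; nlinarith [pow_pos (by norm_num : (0:ℝ) < 2) m]
  calc x ^ m * Real.exp (-x) ≤ ((m.factorial * 2 ^ m) * Real.exp (x/2)) * Real.exp (-x) := by
        exact mul_le_mul_of_nonneg_right h3 (Real.exp_pos _).le
    _ = (m.factorial * 2 ^ m) * Real.exp (-(x/2)) := by
        rw [mul_assoc, ← Real.exp_add]; ring_nf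

lemma integrableOn_pow_exp {δ : ℝ} (hδ : 0 < δ) (m : ℕ) {v : ℝ} (hv : 0 ≤ v) :
    IntegrableOn (fun s => s ^ m * Real.exp (-δ * s)) (Set.Ioi v) := by
  refine Integrable.mono' (g := fun s => ((m.factorial * 2 ^ m : ℝ) / δ ^ m) * Real.exp (-(δ/2) * s))
    ((exp_neg_integrableOn_Ioi v (by positivity)).const_mul _)
    ((Continuous.continuousOn (by continuity)).aestronglyMeasurable measurableSet_Ioi) ?_
  rw [ae_restrict_iff' measurableSet_Ioi]
  refine ae_of_all _ fun s hs => ?_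
  have hs0 : 0 ≤ s := le_of_lt (lt_of_le_of_lt hv hs)
  have key := pow_mul_exp_le' m (x := δ * s) (by positivity)
  have h1 : (δ * s) ^ m = δ ^ m * s ^ m := mul_pow δ s m
  rw [h1] at key
  have hexp : Real.exp (-(δ * s)) = Real.exp (-δ * s) := by ring_nf
  have hexp2 : Real.exp (-(δ * s / 2)) = Real.exp (-(δ/2) * s) := by ring_nf
  rw [hexp, hexp2] at key
  have : s ^ m * Real.exp (-δ * s) ≤ (↑m.factorial * 2 ^ m / δ ^ m) * Real.exp (-(δ/2) * s) := by
    rw [div_mul_eq_mul_div, le_div_iff₀ (by positivity)]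
    nlinarith [pow_pos hδ m]
  rw [Real.norm_eq_abs, abs_of_nonneg (by positivity)]
  exact this

lemma integrableOn_ker {C δ : ℝ} (hδ : 0 < δ)
    {h : ℝ → ℂ} (hcont : ContinuousOn h (Set.Ici 0))
    (hbound : ∀ s : ℝ, 0 ≤ s → ‖h s‖ ≤ C * Real.exp (-δ * s))
    (m : ℕ) {v : ℝ} (hv : 0 ≤ v) (t : ℝ) :
    IntegrableOn (fun s => (s ^ m * Real.exp (-(s * t ^ 2))) • h s) (Set.Ioi v) := by
  have hmeas : AEStronglyMeasurable (fun s => (s ^ m * Real.exp (-(s * t ^ 2))) • h s)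
      (volume.restrict (Set.Ioi v)) := by
    refine ContinuousOn.aestronglyMeasurable ?_ measurableSet_Ioi
    exact (Continuous.continuousOn (f := fun s : ℝ => s ^ m * Real.exp (-(s * t ^ 2)))
      (s := Set.Ioi v) (by continuity)).smul
      (hcont.mono fun s hs => le_of_lt (lt_of_le_of_lt hv hs))
  refine Integrable.mono' (g := fun s => C * (s ^ m * Real.exp (-δ * s)))
    ((integrableOn_pow_exp hδ m hv).const_mul C) hmeas ?_
  rw [ae_restrict_iff' measurableSet_Ioi]
  refine ae_of_all _ fun s hs => ?_
  have hs0 : 0 ≤ s := le_of_lt (lt_of_le_of_lt hv hs)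
  rw [norm_smul, Real.norm_eq_abs,
    abs_of_nonneg (by positivity : (0:ℝ) ≤ s ^ m * Real.exp (-(s * t ^ 2)))]
  have he1 : Real.exp (-(s * t ^ 2)) ≤ 1 := Real.exp_le_one_iff.2 (neg_nonpos.2 (by positivity))
  calc s ^ m * Real.exp (-(s * t ^ 2)) * ‖h s‖ ≤ s ^ m * 1 * (C * Real.exp (-δ * s)) := by
        refine mul_le_mul (mul_le_mul_of_nonneg_left he1 (by positivity)) (hbound s hs0)
          (norm_nonneg _) (by positivity)
    _ = C * (s ^ m * Real.exp (-δ * s)) := by ring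

def Jker (h : ℝ → ℂ) (m : ℕ) (v t : ℝ) : ℂ :=
  ∫ s in Set.Ioi v, (s ^ m * Real.exp (-(s * t ^ 2))) • h s

lemma hasDerivAt_Jker {C δ : ℝ} (hδ : 0 < δ)
    {h : ℝ → ℂ} (hcont : ContinuousOn h (Set.Ici 0))
    (hbound : ∀ s : ℝ, 0 ≤ s → ‖h s‖ ≤ C * Real.exp (-δ * s))
    (m : ℕ) {v : ℝ} (hv : 0 ≤ v) (t : ℝ) :
    HasDerivAt (Jker h m v) ((-2 * t) • Jker h (m + 1) v t) t := by
  have hC0 : 0 ≤ C := le_trans (norm_nonneg (h 0)) <| by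
    simpa using hbound 0 le_rfl
  set F : ℝ → ℝ → ℂ := fun x s => (s ^ m * Real.exp (-(s * x ^ 2))) • h s with hF
  set F' : ℝ → ℝ → ℂ := fun x s => ((-2 * x) * (s ^ (m + 1) * Real.exp (-(s * x ^ 2)))) • h s
    with hF'
  have hmeas : ∀ x : ℝ, AEStronglyMeasurable (F x) (volume.restrict (Set.Ioi v)) :=
    fun x => (integrableOn_ker hδ hcont hbound m hv x).aestronglyMeasurable
  have hmeas' : AEStronglyMeasurable (F' t) (volume.restrict (Set.Ioi v)) := by
    have := ((integrableOn_ker hδ hcont hbound (m + 1) hv t).smul (c := (-2 * t : ℝ)))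
    refine this.aestronglyMeasurable.congr (ae_of_all _ fun s => ?_)
    simp only [Pi.smul_apply, F', smul_smul]
  have key := hasDerivAt_integral_of_dominated_loc_of_deriv_le (μ := volume.restrict (Set.Ioi v))
    (F := F) (F' := F') (x₀ := t)
    (bound := fun s => (2 * (|t| + 1) * C) * (s ^ (m + 1) * Real.exp (-δ * s)))
    (Metric.ball_mem_nhds t one_pos) (Filter.Eventually.of_forall hmeas) (integrableOn_ker hδ hcont hbound m hv t)
    hmeas' ?_ (((integrableOn_pow_exp hδ (m + 1) hv)).const_mul _) ?_
  · have h1 : (∫ s in Set.Ioi v, F' t s) = (-2 * t) • Jker h (m + 1) v t := by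
      rw [Jker, ← integral_smul]
      refine setIntegral_congr_fun measurableSet_Ioi fun s _ => ?_
      simp only [F', smul_smul]
    rw [← h1]
    exact key.2
  · rw [ae_restrict_iff' measurableSet_Ioi]
    refine ae_of_all _ fun s hs x hx => ?_
    have hs0 : 0 ≤ s := le_of_lt (lt_of_le_of_lt hv hs)
    have hxt : |x| ≤ |t| + 1 := by
      have := mem_ball_iff_norm.1 hx
      rw [Real.norm_eq_abs] at this
      calc |x| = |x - t + t| := by ring_nf
        _ ≤ |x - t| + |t| := abs_add_le _ _
        _ ≤ |t| + 1 := by linarith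
    have he1 : Real.exp (-(s * x ^ 2)) ≤ 1 :=
      Real.exp_le_one_iff.2 (neg_nonpos.2 (by positivity))
    rw [hF', norm_smul, Real.norm_eq_abs, abs_mul,
      abs_of_nonneg (by positivity : (0:ℝ) ≤ s ^ (m+1) * Real.exp (-(s * x ^ 2)))]
    have habs : |(-2 : ℝ) * x| = 2 * |x| := by rw [abs_mul]; norm_num
    calc |(-2:ℝ) * x| * (s ^ (m+1) * Real.exp (-(s * x ^ 2))) * ‖h s‖
        ≤ (2 * (|t| + 1)) * (s ^ (m+1) * 1) * (C * Real.exp (-δ * s)) := by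
          rw [habs]
          refine mul_le_mul (mul_le_mul (by nlinarith [abs_nonneg x])
            (mul_le_mul_of_nonneg_left he1 (by positivity)) (by positivity) (by positivity))
            (hbound s hs0) (norm_nonneg _) (by positivity)
      _ = (2 * (|t| + 1) * C) * (s ^ (m+1) * Real.exp (-δ * s)) := by ring
  · rw [ae_restrict_iff' measurableSet_Ioi]
    refine ae_of_all _ fun s _ x _ => ?_
    have hinner : HasDerivAt (fun x : ℝ => -(s * x ^ 2)) (-(s * (2 * x))) x := by
      have := ((hasDerivAt_pow 2 x).const_mul s).fun_neg
      simpa using this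
    have hexp : HasDerivAt (fun x : ℝ => Real.exp (-(s * x ^ 2)))
        (Real.exp (-(s * x ^ 2)) * -(s * (2 * x))) x := hinner.exp
    have hmul := hexp.const_mul (s ^ m)
    have := hmul.smul_const (h s)
    convert this using 1
    rw [hF']
    rw [show s ^ m * (Real.exp (-(s * x ^ 2)) * -(s * (2 * x)))
        = (-2 * x) * (s ^ (m + 1) * Real.exp (-(s * x ^ 2))) by ring]

def JkerC (h : ℝ → ℂ) (v : ℝ) (z : ℂ) : ℂ :=
  ∫ s in Set.Ioi v, Complex.exp (-(s * z)) * h s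

lemma integrableOn_kerC {C δ : ℝ} (hδ : 0 < δ)
    {h : ℝ → ℂ} (hcont : ContinuousOn h (Set.Ici 0))
    (hbound : ∀ s : ℝ, 0 ≤ s → ‖h s‖ ≤ C * Real.exp (-δ * s))
    {v : ℝ} (hv : 0 ≤ v) {z : ℂ} (hz : -δ/2 < z.re) :
    IntegrableOn (fun s : ℝ => Complex.exp (-(s * z)) * h s) (Set.Ioi v) := by
  have hmeas : AEStronglyMeasurable (fun s : ℝ => Complex.exp (-(s * z)) * h s)
      (volume.restrict (Set.Ioi v)) := by
    refine ContinuousOn.aestronglyMeasurable ?_ measurableSet_Ioi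
    exact (Continuous.continuousOn (by continuity)).mul
      (hcont.mono fun s hs => le_of_lt (lt_of_le_of_lt hv hs))
  have ha : (0:ℝ) < δ + z.re := by linarith
  refine Integrable.mono' (g := fun s => C * Real.exp (-(δ + z.re) * s))
    ((exp_neg_integrableOn_Ioi v ha).const_mul C) hmeas ?_
  rw [ae_restrict_iff' measurableSet_Ioi]
  refine ae_of_all _ fun s hs => ?_
  have hs0 : 0 ≤ s := le_of_lt (lt_of_le_of_lt hv hs)
  rw [norm_mul, Complex.norm_exp]
  have hre : (-(s * z)).re = -(s * z.re) := by simp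
  rw [hre]
  calc Real.exp (-(s * z.re)) * ‖h s‖ ≤ Real.exp (-(s * z.re)) * (C * Real.exp (-δ * s)) :=
        mul_le_mul_of_nonneg_left (hbound s hs0) (Real.exp_pos _).le
    _ = C * (Real.exp (-(s * z.re)) * Real.exp (-δ * s)) := by ring
    _ = C * Real.exp (-(δ + z.re) * s) := by rw [← Real.exp_add]; ring_nf

lemma hasDerivAt_JkerC {C δ : ℝ} (hδ : 0 < δ)
    {h : ℝ → ℂ} (hcont : ContinuousOn h (Set.Ici 0))
    (hbound : ∀ s : ℝ, 0 ≤ s → ‖h s‖ ≤ C * Real.exp (-δ * s))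
    {v : ℝ} (hv : 0 ≤ v) {z : ℂ} (hz : -δ/2 < z.re) :
    ∃ w : ℂ, HasDerivAt (JkerC h v) w z := by
  have hC0 : 0 ≤ C := le_trans (norm_nonneg (h 0)) <| by simpa using hbound 0 le_rfl
  set ε : ℝ := (z.re + δ/2) / 2 with hε
  have hε0 : 0 < ε := by rw [hε]; linarith
  set a : ℝ := δ + (z.re - ε) with haa
  have ha0 : 0 < a := by rw [haa, hε]; linarith
  set F : ℂ → ℝ → ℂ := fun x s => Complex.exp (-(s * x)) * h s with hF
  set F' : ℂ → ℝ → ℂ := fun x s => (-(s:ℂ)) * Complex.exp (-(s * x)) * h s with hF'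
  have hmem : ∀ x : ℂ, x ∈ Metric.ball z ε → -δ/2 < x.re := by
    intro x hx
    have h1 : |x.re - z.re| ≤ ‖x - z‖ := by
      rw [show x.re - z.re = (x - z).re by simp]
      exact Complex.abs_re_le_norm _
    have h2 : ‖x - z‖ < ε := mem_ball_iff_norm.1 hx
    have := abs_sub_lt_iff.1 (lt_of_le_of_lt h1 h2)
    rw [hε] at *
    linarith [this.2]
  have hmemre : ∀ x : ℂ, x ∈ Metric.ball z ε → z.re - ε < x.re := by
    intro x hx
    have h1 : |x.re - z.re| ≤ ‖x - z‖ := by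
      rw [show x.re - z.re = (x - z).re by simp]
      exact Complex.abs_re_le_norm _
    have h2 : ‖x - z‖ < ε := mem_ball_iff_norm.1 hx
    have := abs_sub_lt_iff.1 (lt_of_le_of_lt h1 h2)
    linarith [this.2]
  have key := hasDerivAt_integral_of_dominated_loc_of_deriv_le (μ := volume.restrict (Set.Ioi v))
    (F := F) (F' := F') (x₀ := z)
    (bound := fun s => C * (s ^ 1 * Real.exp (-a * s)))
    (Metric.ball_mem_nhds z hε0) ?_ (integrableOn_kerC hδ hcont hbound hv hz) ?_ ?_
    ((integrableOn_pow_exp ha0 1 hv).const_mul C) ?_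
  · exact ⟨_, key.2⟩
  · exact Filter.Eventually.of_forall fun x =>
      ((Continuous.continuousOn (by continuity)).mul
        (hcont.mono fun s hs => le_of_lt (lt_of_le_of_lt hv hs))).aestronglyMeasurable
        measurableSet_Ioi
  · exact ((Continuous.continuousOn (by continuity)).mul
      (hcont.mono fun s hs => le_of_lt (lt_of_le_of_lt hv hs))).aestronglyMeasurable
      measurableSet_Ioi
  · rw [ae_restrict_iff' measurableSet_Ioi]
    refine ae_of_all _ fun s hs x hx => ?_
    have hs0 : 0 ≤ s := le_of_lt (lt_of_le_of_lt hv hs)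
    have hxre : z.re - ε < x.re := hmemre x hx
    rw [hF', norm_mul, norm_mul,
      Complex.norm_exp]
    have hre : (-((s:ℂ) * x)).re = -(s * x.re) := by simp
    rw [hre]
    have habs : ‖(-(s:ℂ))‖ = s := by
      rw [norm_neg, Complex.norm_real, Real.norm_eq_abs, abs_of_nonneg hs0]
    rw [habs]
    have hexp : Real.exp (-(s * x.re)) ≤ Real.exp (-(s * (z.re - ε))) := by
      apply Real.exp_le_exp.2
      nlinarith
    calc s * Real.exp (-(s * x.re)) * ‖h s‖
        ≤ s * Real.exp (-(s * (z.re - ε))) * (C * Real.exp (-δ * s)) := by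
          refine mul_le_mul (mul_le_mul_of_nonneg_left hexp hs0) (hbound s hs0)
            (norm_nonneg _) (by positivity)
      _ = C * (s ^ 1 * (Real.exp (-(s * (z.re - ε))) * Real.exp (-δ * s))) := by ring
      _ = C * (s ^ 1 * Real.exp (-a * s)) := by rw [← Real.exp_add, haa]; ring_nf
  · rw [ae_restrict_iff' measurableSet_Ioi]
    refine ae_of_all _ fun s _ x _ => ?_
    have hinner : HasDerivAt (fun x : ℂ => -((s:ℂ) * x)) (-(s:ℂ)) x := by
      simpa using ((hasDerivAt_id x).const_mul (-(s:ℂ)))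
    have hexp := hinner.cexp
    have := hexp.mul_const (h s)
    show HasDerivAt _ (-(s:ℂ) * Complex.exp (-(s * x)) * h s) x
    exact this.congr_deriv (by ring)

lemma contDiff_laplace {C δ : ℝ} (hδ : 0 < δ)
    {h : ℝ → ℂ} (hcont : ContinuousOn h (Set.Ici 0))
    (hbound : ∀ s : ℝ, 0 ≤ s → ‖h s‖ ≤ C * Real.exp (-δ * s))
    {v : ℝ} (hv : 0 ≤ v) :
    ContDiff ℝ (⊤ : ℕ∞) (fun t : ℝ => ∫ s in Set.Ioi v, Real.exp (-(s * t ^ 2)) • h s) := by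
  have hU : IsOpen {z : ℂ | -δ/2 < z.re} := isOpen_lt continuous_const Complex.continuous_re
  have hGc : AnalyticOnNhd ℂ (JkerC h v) {z : ℂ | -δ/2 < z.re} := by
    refine DifferentiableOn.analyticOnNhd (fun z hz => ?_) hU
    obtain ⟨w, hw⟩ := hasDerivAt_JkerC hδ hcont hbound hv hz
    exact hw.differentiableAt.differentiableWithinAt
  have hsq : AnalyticOnNhd ℝ (fun t : ℝ => ((t : ℂ))^2) Set.univ :=
    (Complex.ofRealCLM.analyticOnNhd Set.univ).pow 2
  have hcomp : AnalyticOnNhd ℝ ((JkerC h v) ∘ fun t : ℝ => ((t : ℂ))^2) Set.univ := by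
    refine (hGc.restrictScalars).comp hsq fun t _ => ?_
    simp only [Set.mem_setOf_eq]
    have h1 : (((t:ℂ))^2).re = t^2 := by norm_cast
    rw [h1]
    nlinarith [sq_nonneg t]
  have heq : (fun t : ℝ => ∫ s in Set.Ioi v, Real.exp (-(s * t ^ 2)) • h s)
      = (JkerC h v) ∘ fun t : ℝ => ((t : ℂ))^2 := by
    funext t
    simp only [Function.comp_apply, JkerC]
    refine setIntegral_congr_fun measurableSet_Ioi fun s _ => ?_
    rw [Complex.real_smul, Complex.ofReal_exp]
    push_cast
    ring_nf
  rw [heq]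
  exact hcomp.contDiff

lemma norm_Jker_le {C δ : ℝ} (hC : 0 < C) (hδ : 0 < δ)
    {h : ℝ → ℂ} (hcont : ContinuousOn h (Set.Ici 0))
    (hbound : ∀ s : ℝ, 0 ≤ s → ‖h s‖ ≤ C * Real.exp (-δ * s))
    (m : ℕ) {v : ℝ} (hv : 0 ≤ v) (t : ℝ) :
    ‖(t ^ (2 * m) : ℝ) • Jker h m v t‖
      ≤ (m.factorial * 2 ^ m * C * max 2 δ⁻¹) / (1 + t ^ 2) := by
  set a : ℝ := t ^ 2 / 2 + δ with haa
  have ha0 : 0 < a := by positivity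
  have ht0 : (0:ℝ) ≤ t ^ (2 * m) := by
    rw [pow_mul]; positivity
  have step1 : ‖(t ^ (2 * m) : ℝ) • Jker h m v t‖
      ≤ t ^ (2 * m) * ∫ s in Set.Ioi v, ‖(s ^ m * Real.exp (-(s * t ^ 2))) • h s‖ := by
    rw [norm_smul, Real.norm_eq_abs, abs_of_nonneg ht0]
    exact mul_le_mul_of_nonneg_left (norm_integral_le_integral_norm _) ht0
  have step2 : t ^ (2 * m) * (∫ s in Set.Ioi v, ‖(s ^ m * Real.exp (-(s * t ^ 2))) • h s‖)
      = ∫ s in Set.Ioi v, t ^ (2 * m) * ‖(s ^ m * Real.exp (-(s * t ^ 2))) • h s‖ := by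
    rw [integral_const_mul]
  have step3 : (∫ s in Set.Ioi v, t ^ (2 * m) * ‖(s ^ m * Real.exp (-(s * t ^ 2))) • h s‖)
      ≤ ∫ s in Set.Ioi v, (m.factorial * 2 ^ m * C) * Real.exp (-a * s) := by
    refine setIntegral_mono_on ?_ ?_ measurableSet_Ioi ?_
    · exact ((integrableOn_ker hδ hcont hbound m hv t).norm.const_mul _)
    · exact (exp_neg_integrableOn_Ioi v ha0).const_mul _
    · intro s hs
      have hs0 : 0 ≤ s := le_of_lt (lt_of_le_of_lt hv hs)
      rw [norm_smul, Real.norm_eq_abs,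
        abs_of_nonneg (by positivity : (0:ℝ) ≤ s ^ m * Real.exp (-(s * t ^ 2)))]
      have key := pow_mul_exp_le' m (x := s * t ^ 2) (by positivity)
      have h1 : t ^ (2 * m) * s ^ m = (s * t ^ 2) ^ m := by
        rw [mul_pow, pow_mul]; ring
      calc t ^ (2 * m) * (s ^ m * Real.exp (-(s * t ^ 2)) * ‖h s‖)
          = ((s * t ^ 2) ^ m * Real.exp (-(s * t ^ 2))) * ‖h s‖ := by rw [← h1]; ring
        _ ≤ ((m.factorial * 2 ^ m) * Real.exp (-(s * t ^ 2 / 2))) * (C * Real.exp (-δ * s)) := by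
            refine mul_le_mul key (hbound s hs0) (norm_nonneg _) (by positivity)
        _ = (m.factorial * 2 ^ m * C) * (Real.exp (-(s * t ^ 2 / 2)) * Real.exp (-δ * s)) := by
            ring
        _ = (m.factorial * 2 ^ m * C) * Real.exp (-a * s) := by
            rw [← Real.exp_add, haa]; ring_nf
  have step4 : (∫ s in Set.Ioi v, (m.factorial * 2 ^ m * C : ℝ) * Real.exp (-a * s))
      ≤ (m.factorial * 2 ^ m * C) * a⁻¹ := by
    rw [integral_const_mul]
    refine mul_le_mul_of_nonneg_left ?_ (by positivity)
    have hsub : (∫ s in Set.Ioi v, Real.exp (-a * s)) ≤ ∫ s in Set.Ioi 0, Real.exp (-a * s) := by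
      refine setIntegral_mono_set (exp_neg_integrableOn_Ioi 0 ha0)
        (ae_of_all _ fun s => (Real.exp_pos _).le) (HasSubset.Subset.eventuallyLE ?_)
      exact Set.Ioi_subset_Ioi hv
    refine le_trans hsub (le_of_eq ?_)
    have := MeasureTheory.integral_comp_mul_left_Ioi (fun x => Real.exp (-x)) 0 ha0
    simp only [mul_zero] at this
    rw [show (fun s => Real.exp (-a * s)) = fun s => Real.exp (-(a * s)) by
      funext s; ring_nf]
    rw [this, integral_exp_neg_Ioi, smul_eq_mul]
    simp
  have step5 : (m.factorial * 2 ^ m * C : ℝ) * a⁻¹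
      ≤ (m.factorial * 2 ^ m * C * max 2 δ⁻¹) / (1 + t ^ 2) := by
    rw [mul_div_assoc]
    refine mul_le_mul_of_nonneg_left ?_ (by positivity)
    rw [inv_eq_one_div, div_le_div_iff₀ ha0 (by positivity)]
    have h2 : (2:ℝ) ≤ max 2 δ⁻¹ := le_max_left _ _
    have h3 : δ⁻¹ ≤ max 2 δ⁻¹ := le_max_right _ _
    have h4 : 1 ≤ max 2 δ⁻¹ * δ := by
      rw [← inv_mul_cancel₀ (ne_of_gt hδ)]
      exact mul_le_mul_of_nonneg_right h3 hδ.le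
    rw [haa]
    nlinarith [sq_nonneg t]
  calc ‖(t ^ (2 * m) : ℝ) • Jker h m v t‖
      ≤ t ^ (2 * m) * ∫ s in Set.Ioi v, ‖(s ^ m * Real.exp (-(s * t ^ 2))) • h s‖ := step1
    _ = _ := step2
    _ ≤ _ := step3
    _ ≤ _ := step4
    _ ≤ _ := step5

lemma tDer_iterate {C δ : ℝ} (hδ : 0 < δ)
    {h : ℝ → ℂ} (hcont : ContinuousOn h (Set.Ici 0))
    (hbound : ∀ s : ℝ, 0 ≤ s → ‖h s‖ ≤ C * Real.exp (-δ * s)) (p : ℕ) :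
    ∃ c : ℕ → ℝ, ∀ v : ℝ, 0 ≤ v →
      tDer^[p] (fun t => ∫ s in Set.Ioi v, Real.exp (-(s * t ^ 2)) • h s)
        = fun t => ∑ k ∈ Finset.range (p + 1), c k • ((t ^ (2 * k) : ℝ) • Jker h k v t) := by
  induction p with
  | zero =>
    refine ⟨fun _ => 1, fun v hv => ?_⟩
    funext t
    simp [Jker]
  | succ p ih =>
    obtain ⟨c, hc⟩ := ih
    set cpad : ℕ → ℝ := fun k => if k < p + 1 then c k else 0 with hcpad
    have hc' : ∀ v : ℝ, 0 ≤ v →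
        tDer^[p] (fun t => ∫ s in Set.Ioi v, Real.exp (-(s * t ^ 2)) • h s)
          = fun t => ∑ k ∈ Finset.range (p + 1), cpad k • ((t ^ (2 * k) : ℝ) • Jker h k v t) := by
      intro v hv
      rw [hc v hv]
      funext t
      refine Finset.sum_congr rfl fun k hk => ?_
      rw [hcpad]
      simp only [if_pos (Finset.mem_range.1 hk)]
    refine ⟨fun k => 2 * k * cpad k + (if k = 0 then 0 else -2 * cpad (k - 1)), fun v hv => ?_⟩
    funext t
    rw [Function.iterate_succ_apply', hc' v hv]
    have hSum : HasDerivAt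
        (fun t : ℝ => ∑ k ∈ Finset.range (p + 1), cpad k • ((t ^ (2 * k) : ℝ) • Jker h k v t))
        (∑ k ∈ Finset.range (p + 1), cpad k •
          ((t ^ (2 * k) : ℝ) • ((-2 * t) • Jker h (k + 1) v t)
            + ((2 * k : ℕ) * t ^ (2 * k - 1) : ℝ) • Jker h k v t)) t := by
      refine HasDerivAt.fun_sum fun k _ => ?_
      exact ((hasDerivAt_pow (2 * k) t).smul (hasDerivAt_Jker hδ hcont hbound k hv t)).const_smul
        (cpad k)
    show t • deriv
        (fun t : ℝ => ∑ k ∈ Finset.range (p + 1), cpad k • ((t ^ (2 * k) : ℝ) • Jker h k v t)) t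
      = _
    rw [hSum.deriv, Finset.smul_sum]
    have hterm : ∀ k, t • (cpad k •
        ((t ^ (2 * k) : ℝ) • ((-2 * t) • Jker h (k + 1) v t)
          + ((2 * k : ℕ) * t ^ (2 * k - 1) : ℝ) • Jker h k v t))
        = (2 * k * cpad k) • ((t ^ (2 * k) : ℝ) • Jker h k v t)
          + (-2 * cpad k) • ((t ^ (2 * (k + 1)) : ℝ) • Jker h (k + 1) v t) := by
      intro k
      simp only [smul_add, smul_smul]
      rw [add_comm]
      congr 1
      · congr 1
        cases k with
        | zero => simp
        | succ j =>
          push_cast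
          rw [show 2 * (j + 1) - 1 = 2 * j + 1 from rfl]
          ring
      · congr 1
        ring
    rw [Finset.sum_congr rfl fun k _ => hterm k, Finset.sum_add_distrib]
    have hfirst : (∑ k ∈ Finset.range (p + 1),
          (2 * (k:ℝ) * cpad k) • ((t ^ (2 * k) : ℝ) • Jker h k v t))
        = ∑ k ∈ Finset.range (p + 2),
          (2 * (k:ℝ) * cpad k) • ((t ^ (2 * k) : ℝ) • Jker h k v t) := by
      rw [Finset.sum_range_succ (n := p + 1)]
      have : cpad (p + 1) = 0 := by rw [hcpad]; simp
      rw [this]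
      simp
    have hsecond : (∑ k ∈ Finset.range (p + 1),
          (-2 * cpad k) • ((t ^ (2 * (k + 1)) : ℝ) • Jker h (k + 1) v t))
        = ∑ k ∈ Finset.range (p + 2),
          (if k = 0 then (0:ℝ) else -2 * cpad (k - 1)) • ((t ^ (2 * k) : ℝ) • Jker h k v t) := by
      rw [Finset.sum_range_succ' (n := p + 1)]
      simp
    rw [hfirst, hsecond, ← Finset.sum_add_distrib]
    refine Finset.sum_congr rfl fun k _ => ?_
    rw [← add_smul]

theorem laplaceG_symbol_estimates (C δ : ℝ) (hC : 0 < C) (hδ : 0 < δ)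
    (h : ℝ → ℂ) (hcont : ContinuousOn h (Set.Ici 0))
    (hbound : ∀ s : ℝ, 0 ≤ s → ‖h s‖ ≤ C * Real.exp (-δ * s)) :
    (∀ v : ℝ, 0 ≤ v → ContDiff ℝ (⊤ : ℕ∞) (laplaceG h v)) ∧
      ∀ p : ℕ, ∃ Cp : ℝ, 0 < Cp ∧
        ∀ v : ℝ, 0 ≤ v → ∀ t : ℝ,
          ‖tDer^[p] (laplaceG h v) t‖ ≤ Cp / (1 + t ^ 2) := by
  have hlg : ∀ v : ℝ, laplaceG h v = fun t => ∫ s in Set.Ioi v, Real.exp (-(s * t ^ 2)) • h s :=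
    fun v => rfl
  constructor
  · intro v hv
    rw [hlg v]
    exact contDiff_laplace hδ hcont hbound hv
  · intro p
    obtain ⟨c, hc⟩ := tDer_iterate hδ hcont hbound p
    set Cp : ℝ :=
      (∑ k ∈ Finset.range (p + 1), |c k| * (k.factorial * 2 ^ k * C * max 2 δ⁻¹)) + 1 with hCp
    have hCp0 : 0 < Cp := by
      rw [hCp]
      have : (0:ℝ) ≤ ∑ k ∈ Finset.range (p + 1), |c k| * (k.factorial * 2 ^ k * C * max 2 δ⁻¹) :=
        Finset.sum_nonneg fun k _ => mul_nonneg (abs_nonneg _) (by positivity)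
      linarith
    refine ⟨Cp, hCp0, fun v hv t => ?_⟩
    rw [hlg v, hc v hv]
    have hden : (0:ℝ) < 1 + t ^ 2 := by positivity
    calc ‖∑ k ∈ Finset.range (p + 1), c k • ((t ^ (2 * k) : ℝ) • Jker h k v t)‖
        ≤ ∑ k ∈ Finset.range (p + 1), ‖c k • ((t ^ (2 * k) : ℝ) • Jker h k v t)‖ :=
          norm_sum_le _ _
      _ ≤ ∑ k ∈ Finset.range (p + 1),
            |c k| * ((k.factorial * 2 ^ k * C * max 2 δ⁻¹) / (1 + t ^ 2)) := by
          refine Finset.sum_le_sum fun k _ => ?_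
          rw [norm_smul, Real.norm_eq_abs]
          exact mul_le_mul_of_nonneg_left (norm_Jker_le hC hδ hcont hbound k hv t) (abs_nonneg _)
      _ = (∑ k ∈ Finset.range (p + 1), |c k| * (k.factorial * 2 ^ k * C * max 2 δ⁻¹))
            / (1 + t ^ 2) := by
          rw [Finset.sum_div]
          exact Finset.sum_congr rfl fun k _ => by ring
      _ ≤ Cp / (1 + t ^ 2) := by
          gcongr
          rw [hCp]
          linarith
end
end
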